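/- Under Assumptions A and B, let {xᵗ} be generated by SCP_ls and let Ω_x be the set of accumulation points of {xᵗ}. Then: (i) Ω_x ≠ ∅ and F is constant on Ω_x, equal to bar F* := lim_{t→∞} bar F(x^{t+1}, xᵗ, L_gᵗ); (ii) the sequence {F(xᵗ)} is nonincreasing and converges to bar F*. -/

import Mathlib

open Set Filter Topology Metric Bornology RealInnerProductSpace
open scoped Classical

noncomputable section

abbrev Euc (n : ℕ) : Type := EuclideanSpace ℝ (Fin n)

/-- Convex subdifferential of a real-valued function on an inner product space. -/
def ConvexSubdiff {H : Type*} [NormedAddCommGroup H] [InnerProductSpace ℝ H]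
    (P : H → ℝ) (x : H) : Set H :=
  {ζ | ∀ y, ⟪ζ, y - x⟫ ≤ P y - P x}

/-- Regular (Fréchet) subdifferential of an extended-real-valued function. -/
def RegularSubdiff {H : Type*} [NormedAddCommGroup H] [InnerProductSpace ℝ H]
    (h : H → EReal) (x : H) : Set H :=
  {ζ | h x ≠ ⊤ ∧ h x ≠ ⊥ ∧ ∀ ε : ℝ, 0 < ε →
    ∀ᶠ z in 𝓝 x,
      (((h x).toReal + ⟪ζ, z - x⟫ - ε * ‖z - x‖ : ℝ) : EReal) ≤ h z}

/-- Limiting (Mordukhovich) subdifferential. -/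
def LimSubdiff {H : Type*} [NormedAddCommGroup H] [InnerProductSpace ℝ H]
    (h : H → EReal) (x : H) : Set H :=
  {ζ | ∃ xs ζs : ℕ → H, (∀ k, ζs k ∈ RegularSubdiff h (xs k)) ∧
    Tendsto xs atTop (𝓝 x) ∧ Tendsto (fun k => h (xs k)) atTop (𝓝 (h x)) ∧
    Tendsto ζs atTop (𝓝 ζ)}

/-- The Kurdyka–Łojasiewicz property with exponent `α` at a point. -/
def KLExpAt {H : Type*} [NormedAddCommGroup H] [InnerProductSpace ℝ H]
    (h : H → EReal) (α : ℝ) (xhat : H) : Prop :=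
  ∃ a₀ : ℝ, 0 < a₀ ∧ ∃ a : ℝ, 0 < a ∧ ∃ V ∈ 𝓝 xhat, ∀ x ∈ V,
    h xhat < h x → h x < h xhat + (a : EReal) →
    1 ≤ a₀ * (1 - α) * ((h x).toReal - (h xhat).toReal) ^ (-α) *
        infDist 0 (LimSubdiff h x)

/-- The general Kurdyka–Łojasiewicz property at a point. -/
def KLAt {H : Type*} [NormedAddCommGroup H] [InnerProductSpace ℝ H]
    (h : H → EReal) (xhat : H) : Prop :=
  ∃ a : ℝ, 0 < a ∧ ∃ V ∈ 𝓝 xhat, ∃ φ φ' : ℝ → ℝ,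
    φ 0 = 0 ∧ ContinuousOn φ (Ico 0 a) ∧ ConcaveOn ℝ (Ico 0 a) φ ∧
    (∀ s ∈ Ioo 0 a, HasDerivAt φ (φ' s) s ∧ 0 < φ' s) ∧
    ∀ x ∈ V, h xhat < h x → h x < h xhat + (a : EReal) →
      1 ≤ φ' ((h x).toReal - (h xhat).toReal) * infDist 0 (LimSubdiff h x)

/-- The extended objective of problem (P). -/
def Fobj {n m : ℕ} (f P1 P2 : Euc n → ℝ) (g : Fin m → Euc n → ℝ) (x : Euc n) : EReal :=
  if ∀ i, g i x ≤ 0 then ((f x + P1 x - P2 x : ℝ) : EReal) else ⊤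

/-- The moving balls constraint functions. -/
def barG {n m : ℕ} (g : Fin m → Euc n → ℝ) (g' : Fin m → Euc n → Euc n)
    (x y : Euc n) (w : EuclideanSpace ℝ (Fin m)) (i : Fin m) : ℝ :=
  g i y + ⟪g' i y, x - y⟫ + w i / 2 * ‖x - y‖ ^ 2

/-- The space `ℝⁿ × ℝⁿ × ℝᵐ` with the (L²) Euclidean inner product. -/
abbrev PS (n m : ℕ) : Type :=
  WithLp 2 (Euc n × WithLp 2 (Euc n × EuclideanSpace ℝ (Fin m)))

/-- The potential function `bar F`. -/
def barF {n m : ℕ} (f P1 P2 : Euc n → ℝ) (g : Fin m → Euc n → ℝ)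
    (g' : Fin m → Euc n → Euc n)
    (p : PS n m) : EReal :=
  if ∀ i, barG g g' p.ofLp.1 p.ofLp.2.ofLp.1 p.ofLp.2.ofLp.2 i ≤ 0 then
    ((f p.ofLp.1 + P1 p.ofLp.1 - P2 p.ofLp.1 : ℝ) : EReal) else ⊤

/-- Stationary points of problem (P). -/
def IsStationaryPt {n m : ℕ} (f P1 P2 : Euc n → ℝ) (f' : Euc n → Euc n)
    (g : Fin m → Euc n → ℝ) (g' : Fin m → Euc n → Euc n) (x : Euc n) : Prop :=
  (∀ i, g i x ≤ 0) ∧ ∃ lam : Fin m → ℝ, (∀ i, 0 ≤ lam i) ∧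
    (∀ i, lam i * g i x = 0) ∧
    ∃ u ∈ ConvexSubdiff P1 x, ∃ v ∈ ConvexSubdiff P2 x,
      f' x + u - v + ∑ i, lam i • g' i x = 0

/-- Assumptions A (smoothness, Lipschitz gradients, level-boundedness) and B (MFCQ). -/
def AssumptionAB {n m : ℕ} (f P1 P2 : Euc n → ℝ) (f' : Euc n → Euc n)
    (g : Fin m → Euc n → ℝ) (g' : Fin m → Euc n → Euc n)
    (Lf : ℝ) (Lg : Fin m → ℝ) : Prop :=
  (∀ x, HasGradientAt f (f' x) x) ∧ LipschitzWith Lf.toNNReal f' ∧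
  ConvexOn ℝ univ P1 ∧ Continuous P1 ∧ ConvexOn ℝ univ P2 ∧ Continuous P2 ∧
  (∀ i x, HasGradientAt (g i) (g' i x) x) ∧
  (∀ i, LipschitzWith (Lg i).toNNReal (g' i)) ∧
  {x : Euc n | ∀ i, g i x ≤ 0}.Nonempty ∧
  (∀ σ : ℝ, IsBounded {x | Fobj f P1 P2 g x ≤ (σ : EReal)}) ∧
  (∀ x : Euc n, (∀ i, g i x ≤ 0) → ∃ d, ∀ i, g i x = 0 → ⟪g' i x, d⟫ < 0)

/-- The sequences generated by the SCP_ls algorithm. -/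
structure SCPlsSeq {n m : ℕ} (f P1 P2 : Euc n → ℝ) (f' : Euc n → Euc n)
    (g : Fin m → Euc n → ℝ) (g' : Fin m → Euc n → Euc n)
    (c Llo : ℝ) (x ξ : ℕ → Euc n) (Lfs : ℕ → ℝ)
    (Lgs : ℕ → EuclideanSpace ℝ (Fin m)) : Prop where
  feas0 : ∀ i, g i (x 0) ≤ 0
  subgrad : ∀ t, ξ t ∈ ConvexSubdiff P2 (x t)
  Lf_lb : ∀ t, Llo ≤ Lfs t
  Lg_lb : ∀ t i, Llo ≤ Lgs t i
  bdd : ∃ M : ℝ, ∀ t, Lfs t ≤ M ∧ ∀ i, Lgs t i ≤ M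
  feas_sub : ∀ t i, barG g g' (x (t + 1)) (x t) (Lgs t) i ≤ 0
  min : ∀ t z, (∀ i, barG g g' z (x t) (Lgs t) i ≤ 0) →
    ⟪f' (x t) - ξ t, x (t + 1) - x t⟫ + Lfs t / 2 * ‖x (t + 1) - x t‖ ^ 2
        + P1 (x (t + 1))
      ≤ ⟪f' (x t) - ξ t, z - x t⟫ + Lfs t / 2 * ‖z - x t‖ ^ 2 + P1 z
  uniq : ∀ t z, (∀ i, barG g g' z (x t) (Lgs t) i ≤ 0) →
    ⟪f' (x t) - ξ t, z - x t⟫ + Lfs t / 2 * ‖z - x t‖ ^ 2 + P1 z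
      ≤ ⟪f' (x t) - ξ t, x (t + 1) - x t⟫ + Lfs t / 2 * ‖x (t + 1) - x t‖ ^ 2
        + P1 (x (t + 1)) → z = x (t + 1)
  feas : ∀ t i, g i (x (t + 1)) ≤ 0
  descent : ∀ t, f (x (t + 1)) + P1 (x (t + 1)) - P2 (x (t + 1)) ≤
    f (x t) + P1 (x t) - P2 (x t) - c / 2 * ‖x (t + 1) - x t‖ ^ 2

/-- Cluster points of a sequence (limits of subsequences). -/
def seqClusterPts {X : Type*} [TopologicalSpace X] (u : ℕ → X) : Set X :=
  {p | ∃ φ : ℕ → ℕ, StrictMono φ ∧ Tendsto (u ∘ φ) atTop (𝓝 p)}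


/-!
The descent condition makes `F(xᵗ)` nonincreasing, so the iterates stay in the level set
`{F ≤ F(x⁰)}`, which is bounded; hence they have a cluster point `p`. Since the iterates are
feasible, `F(xᵗ)` is the continuous function `f + P₁ - P₂` evaluated at `xᵗ`, so along the
subsequence it tends to `F(p)`, and by monotonicity the whole sequence does. The same argument
at any other cluster point gives the same value, and `bar F(xᵗ⁺¹, xᵗ, L_gᵗ) = F(xᵗ⁺¹)` because
`xᵗ⁺¹` satisfies the moving-ball constraints.
-/

theorem Antitone.tendsto_of_tendsto_comp {α : Type*} [ConditionallyCompleteLinearOrder α]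
    [TopologicalSpace α] [OrderTopology α] {u : ℕ → α} (hu : Antitone u) {φ : ℕ → ℕ}
    (hφ : StrictMono φ) {l : α} (hl : Tendsto (u ∘ φ) atTop (𝓝 l)) :
    Tendsto u atTop (𝓝 l) := by
  have hbdd : BddBelow (range u) := by
    refine ⟨l, ?_⟩
    rintro _ ⟨t, rfl⟩
    exact ((hu.comp_monotone hφ.monotone).le_of_tendsto hl t).trans (hu hφ.le_apply)
  have hinf := tendsto_atTop_ciInf hu hbdd
  rwa [tendsto_nhds_unique (hinf.comp hφ.tendsto_atTop) hl] at hinf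

section

variable {n m : ℕ} {f P1 P2 : Euc n → ℝ} {f' : Euc n → Euc n} {g : Fin m → Euc n → ℝ}
  {g' : Fin m → Euc n → Euc n}

theorem Fobj_of_feasible {y : Euc n} (hy : ∀ i, g i y ≤ 0) :
    Fobj f P1 P2 g y = ((f y + P1 y - P2 y : ℝ) : EReal) :=
  if_pos hy

namespace AssumptionAB

variable {Lf : ℝ} {Lg : Fin m → ℝ}

theorem continuous_objective (hAB : AssumptionAB f P1 P2 f' g g' Lf Lg) :
    Continuous fun y => f y + P1 y - P2 y := by
  obtain ⟨hf, -, -, hP1, -, hP2, -⟩ := hAB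
  exact ((continuous_iff_continuousAt.mpr fun y => (hf y).continuousAt).add hP1).sub hP2

theorem isClosed_feasible (hAB : AssumptionAB f P1 P2 f' g g' Lf Lg) :
    IsClosed {y | ∀ i, g i y ≤ 0} := by
  obtain ⟨-, -, -, -, -, -, hg, -⟩ := hAB
  simp only [ofPred_forall]
  exact isClosed_iInter fun i =>
    isClosed_le (continuous_iff_continuousAt.mpr fun y => (hg i y).continuousAt) continuous_const

theorem isBounded_sublevel (hAB : AssumptionAB f P1 P2 f' g g' Lf Lg) (σ : ℝ) :
    IsBounded {y | Fobj f P1 P2 g y ≤ (σ : EReal)} := by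
  obtain ⟨-, -, -, -, -, -, -, -, -, hlev, -⟩ := hAB
  exact hlev σ

theorem Fobj_eq_of_mem_seqClusterPts (hAB : AssumptionAB f P1 P2 f' g g' Lf Lg)
    {x : ℕ → Euc n} (hfeas : ∀ t i, g i (x t) ≤ 0) {l : ℝ}
    (hl : Tendsto (fun t => f (x t) + P1 (x t) - P2 (x t)) atTop (𝓝 l))
    {p : Euc n} (hp : p ∈ seqClusterPts x) : Fobj f P1 P2 g p = (l : EReal) := by
  obtain ⟨φ, hφ, hxφ⟩ := hp
  have hp_feas : ∀ i, g i p ≤ 0 :=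
    hAB.isClosed_feasible.mem_of_tendsto hxφ (Eventually.of_forall fun k => hfeas (φ k))
  rw [Fobj_of_feasible hp_feas,
    tendsto_nhds_unique ((hAB.continuous_objective.tendsto p).comp hxφ) (hl.comp hφ.tendsto_atTop)]

end AssumptionAB

namespace SCPlsSeq

variable {c Llo : ℝ} {x ξ : ℕ → Euc n} {Lfs : ℕ → ℝ} {Lgs : ℕ → EuclideanSpace ℝ (Fin m)}

theorem feasible (hseq : SCPlsSeq f P1 P2 f' g g' c Llo x ξ Lfs Lgs) (t : ℕ) (i : Fin m) :
    g i (x t) ≤ 0 := by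
  cases t with
  | zero => exact hseq.feas0 i
  | succ t => exact hseq.feas t i

theorem Fobj_eq (hseq : SCPlsSeq f P1 P2 f' g g' c Llo x ξ Lfs Lgs) (t : ℕ) :
    Fobj f P1 P2 g (x t) = ((f (x t) + P1 (x t) - P2 (x t) : ℝ) : EReal) :=
  Fobj_of_feasible (hseq.feasible t)

theorem barF_eq (hseq : SCPlsSeq f P1 P2 f' g g' c Llo x ξ Lfs Lgs) (t : ℕ) :
    barF f P1 P2 g g' (WithLp.toLp 2 (x (t + 1), WithLp.toLp 2 (x t, Lgs t))) =
      ((f (x (t + 1)) + P1 (x (t + 1)) - P2 (x (t + 1)) : ℝ) : EReal) :=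
  if_pos (hseq.feas_sub t)

theorem antitone_objective (hseq : SCPlsSeq f P1 P2 f' g g' c Llo x ξ Lfs Lgs) (hc : 0 ≤ c) :
    Antitone fun t => f (x t) + P1 (x t) - P2 (x t) := by
  refine antitone_nat_of_succ_le fun t => ?_
  have hstep : 0 ≤ c / 2 * ‖x (t + 1) - x t‖ ^ 2 := by positivity
  linarith [hseq.descent t]

theorem antitone_Fobj (hseq : SCPlsSeq f P1 P2 f' g g' c Llo x ξ Lfs Lgs) (hc : 0 ≤ c) :
    Antitone fun t => Fobj f P1 P2 g (x t) := by
  intro s t hst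
  simp only [hseq.Fobj_eq, EReal.coe_le_coe_iff]
  exact hseq.antitone_objective hc hst

theorem isBounded_range (hseq : SCPlsSeq f P1 P2 f' g g' c Llo x ξ Lfs Lgs) (hc : 0 ≤ c)
    (hlev : ∀ σ : ℝ, IsBounded {y | Fobj f P1 P2 g y ≤ (σ : EReal)}) :
    IsBounded (range x) := by
  refine (hlev (f (x 0) + P1 (x 0) - P2 (x 0))).subset ?_
  rintro _ ⟨t, rfl⟩
  rw [mem_ofPred_eq, ← hseq.Fobj_eq]
  exact hseq.antitone_Fobj hc (Nat.zero_le t)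

end SCPlsSeq

end

theorem stmt11_general {n m : ℕ} (f P1 P2 : Euc n → ℝ) (f' : Euc n → Euc n)
    (g : Fin m → Euc n → ℝ) (g' : Fin m → Euc n → Euc n)
    (Lf : ℝ) (Lg : Fin m → ℝ)
    (hAB : AssumptionAB f P1 P2 f' g g' Lf Lg)
    (c Llo : ℝ) (hc : 0 < c)
    (x ξ : ℕ → Euc n) (Lfs : ℕ → ℝ) (Lgs : ℕ → EuclideanSpace ℝ (Fin m))
    (hseq : SCPlsSeq f P1 P2 f' g g' c Llo x ξ Lfs Lgs) :
    ∃ Fstar : ℝ,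
      Tendsto (fun t => barF f P1 P2 g g' (WithLp.toLp 2 (x (t + 1), WithLp.toLp 2 (x t, Lgs t)))) atTop
        (𝓝 ((Fstar : ℝ) : EReal)) ∧
      (seqClusterPts x).Nonempty ∧
      (∀ p ∈ seqClusterPts x, Fobj f P1 P2 g p = ((Fstar : ℝ) : EReal)) ∧
      Antitone (fun t => Fobj f P1 P2 g (x t)) ∧
      Tendsto (fun t => Fobj f P1 P2 g (x t)) atTop (𝓝 ((Fstar : ℝ) : EReal)) := by
  obtain ⟨p, -, φ, hφ, hxφ⟩ :=
    tendsto_subseq_of_bounded (hseq.isBounded_range hc.le hAB.isBounded_sublevel) mem_range_self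
  have hlim : Tendsto (fun t => f (x t) + P1 (x t) - P2 (x t)) atTop
      (𝓝 (f p + P1 p - P2 p)) :=
    (hseq.antitone_objective hc.le).tendsto_of_tendsto_comp hφ
      ((hAB.continuous_objective.tendsto p).comp hxφ)
  refine ⟨f p + P1 p - P2 p, ?_, ⟨p, φ, hφ, hxφ⟩,
    fun q hq => hAB.Fobj_eq_of_mem_seqClusterPts hseq.feasible hlim hq,
    hseq.antitone_Fobj hc.le, ?_⟩
  · simp only [hseq.barF_eq]
    exact EReal.tendsto_coe.2 (hlim.comp (tendsto_add_atTop_nat 1))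
  · simp only [hseq.Fobj_eq]
    exact EReal.tendsto_coe.2 hlim

/-- the set of accumulation points of the SCP_ls iterates is nonempty,
`F` is constant (equal to `bar F⋆`) on it, and `{F(x^t)}` is nonincreasing and
converges to `bar F⋆`. -/
theorem stmt11 {n m : ℕ} (f P1 P2 : Euc n → ℝ) (f' : Euc n → Euc n)
    (g : Fin m → Euc n → ℝ) (g' : Fin m → Euc n → Euc n)
    (Lf : ℝ) (Lg : Fin m → ℝ)
    (hAB : AssumptionAB f P1 P2 f' g g' Lf Lg)
    (c Llo : ℝ) (hc : 0 < c) (hLlo : 0 < Llo)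
    (x ξ : ℕ → Euc n) (Lfs : ℕ → ℝ) (Lgs : ℕ → EuclideanSpace ℝ (Fin m))
    (hseq : SCPlsSeq f P1 P2 f' g g' c Llo x ξ Lfs Lgs) :
    ∃ Fstar : ℝ,
      Tendsto (fun t => barF f P1 P2 g g' (WithLp.toLp 2 (x (t + 1), WithLp.toLp 2 (x t, Lgs t)))) atTop
        (𝓝 ((Fstar : ℝ) : EReal)) ∧
      (seqClusterPts x).Nonempty ∧
      (∀ p ∈ seqClusterPts x, Fobj f P1 P2 g p = ((Fstar : ℝ) : EReal)) ∧
      Antitone (fun t => Fobj f P1 P2 g (x t)) ∧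
      Tendsto (fun t => Fobj f P1 P2 g (x t)) atTop (𝓝 ((Fstar : ℝ) : EReal)) :=
  stmt11_general f P1 P2 f' g g' Lf Lg hAB c Llo hc x ξ Lfs Lgs hseq
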